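/- The Hankel determinants of weighted Motzkin numbers satisfy the recursion det(M_{i+j+2;ω})_{0≤i,j≤n−1} = det(M_{i+j+2;ω})_{0≤i,j≤n−2} + (det(M_{i+j+1;ω})_{0≤i,j≤n−1})². -/

import Mathlib

open scoped BigOperators

/-- Weighted count of Motzkin-type paths from (0,0) to (n,j): steps (1,1),(1,-1),(1,0),
horizontal steps weighted ω, staying weakly above the x-axis. -/
def motzkinM (ω : ℚ) : ℕ → ℤ → ℚ
  | 0, j => if j = 0 then 1 else 0
  | n+1, j => if j < 0 then 0 else
      motzkinM ω n (j-1) + ω * motzkinM ω n j + motzkinM ω n (j+1)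

/-!
Splitting a path of length `i + j` after `i` steps gives `M_{i+j} = ∑ₖ M(i, k) M(j, k)`, where
`M(i, k)` counts paths of length `i` ending at height `k`; so the Hankel matrix `(M_{i+j})` is
`T Tᵀ` with `T` lower unitriangular, and all its leading principal minors are `1`. The
Desnanot–Jacobi identity for the `(n+2) × (n+2)` Hankel matrix expresses its inner minor through
the four corner cofactors, which are again Hankel determinants of the shifted sequences
`M_{k+2}`, `M_k` and `M_{k+1}`; with the unit determinants this is the recursion.
-/

noncomputable def Fin.cornerEquiv (n : ℕ) : Fin 2 ⊕ Fin n ≃ Fin (n + 2) :=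
  Equiv.ofBijective (Sum.elim ![0, Fin.last (n + 1)] fun k => k.succ.castSucc) <| by
    rw [Fintype.bijective_iff_injective_and_card]
    refine ⟨?_, by simp [add_comm]⟩
    rintro (i | i) (j | j) h
    · fin_cases i <;> fin_cases j <;> simp_all [Fin.ext_iff]
    · fin_cases i <;> simp [Fin.ext_iff] at h; omega
    · fin_cases j <;> simp [Fin.ext_iff] at h; omega
    · simpa [Fin.ext_iff] using h

namespace Matrix

variable {R : Type*} [CommRing R]

section Blocks

variable {m n : Type*} [Fintype m] [Fintype n] [DecidableEq m] [DecidableEq n]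

theorem det_mul_det_toBlocks₁₁_of_mul_eq_smul_one {P Q : Matrix (m ⊕ n) (m ⊕ n) R} {c : R}
    (hPQ : P * Q = c • 1) :
    P.det * Q.toBlocks₁₁.det = c ^ Fintype.card m * P.toBlocks₂₂.det := by
  rw [← fromBlocks_toBlocks P, ← fromBlocks_toBlocks Q, fromBlocks_multiply, ← fromBlocks_one,
    fromBlocks_smul, fromBlocks_inj] at hPQ
  have hmul : P * fromBlocks Q.toBlocks₁₁ 0 Q.toBlocks₂₁ 1
      = fromBlocks (c • 1) P.toBlocks₁₂ 0 P.toBlocks₂₂ := by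
    conv_lhs => rw [← fromBlocks_toBlocks P]
    rw [fromBlocks_multiply, hPQ.1, hPQ.2.2.1]
    simp
  simpa [det_fromBlocks_zero₁₂, det_fromBlocks_zero₂₁, det_smul] using congrArg det hmul

end Blocks

/-- Desnanot–Jacobi, multiplied through by `det M` so that it holds over any commutative ring. -/
theorem det_mul_desnanot_jacobi {n : ℕ} (M : Matrix (Fin (n + 2)) (Fin (n + 2)) R) :
    M.det * (M.adjugate 0 0 * M.adjugate (Fin.last _) (Fin.last _)
      - M.adjugate 0 (Fin.last _) * M.adjugate (Fin.last _) 0) =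
    M.det ^ 2 * (M.submatrix (fun k : Fin n => k.succ.castSucc) fun k => k.succ.castSucc).det := by
  let e := Fin.cornerEquiv n
  have hPQ : M.submatrix e e * M.adjugate.submatrix e e = M.det • 1 := by
    rw [submatrix_mul_equiv, mul_adjugate, ← submatrix_one_equiv e]
    rfl
  -- Jacobi's complementary minor relation for `M * adj M = det M • 1`, with the corner indices first.
  have := det_mul_det_toBlocks₁₁_of_mul_eq_smul_one hPQ
  rwa [det_submatrix_equiv_self, det_fin_two, Fintype.card_fin] at this

end Matrix

section Hankel

variable {R : Type*}

def hankel (a : ℕ → R) (s m : ℕ) : Matrix (Fin m) (Fin m) R :=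
  Matrix.of fun i j => a (i + j + s)

variable (a : ℕ → R) (s m : ℕ)

theorem hankel_submatrix_castSucc_castSucc :
    (hankel a s (m + 1)).submatrix Fin.castSucc Fin.castSucc = hankel a s m :=
  rfl

theorem hankel_submatrix_castSucc_succ :
    (hankel a s (m + 1)).submatrix Fin.castSucc Fin.succ = hankel a (s + 1) m := by
  ext i j
  simp only [hankel, Matrix.submatrix_apply, Matrix.of_apply, Fin.val_castSucc, Fin.val_succ]
  ring_nf

theorem hankel_submatrix_succ_castSucc :
    (hankel a s (m + 1)).submatrix Fin.succ Fin.castSucc = hankel a (s + 1) m := by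
  ext i j
  simp only [hankel, Matrix.submatrix_apply, Matrix.of_apply, Fin.val_castSucc, Fin.val_succ]
  ring_nf

theorem hankel_submatrix_succ_succ :
    (hankel a s (m + 1)).submatrix Fin.succ Fin.succ = hankel a (s + 2) m := by
  ext i j
  simp only [hankel, Matrix.submatrix_apply, Matrix.of_apply, Fin.val_succ]
  ring_nf

theorem hankel_submatrix_succ_castSucc_succ_castSucc :
    (hankel a s (m + 2)).submatrix (fun k : Fin m => k.succ.castSucc) (fun k => k.succ.castSucc)
      = hankel a (s + 2) m := by
  ext i j
  simp only [hankel, Matrix.submatrix_apply, Matrix.of_apply, Fin.val_castSucc, Fin.val_succ]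
  ring_nf

theorem det_mul_hankel_desnanot_jacobi [CommRing R] (n : ℕ) :
    (hankel a 0 (n + 2)).det * ((hankel a 2 (n + 1)).det * (hankel a 0 (n + 1)).det
      - (hankel a 1 (n + 1)).det ^ 2) = (hankel a 0 (n + 2)).det ^ 2 * (hankel a 2 n).det := by
  have h := Matrix.det_mul_desnanot_jacobi (hankel a 0 (n + 2))
  simp only [Matrix.adjugate_fin_succ_eq_det_submatrix, Fin.succAbove_zero, Fin.succAbove_last,
    hankel_submatrix_castSucc_castSucc, hankel_submatrix_castSucc_succ,
    hankel_submatrix_succ_castSucc, hankel_submatrix_succ_succ,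
    hankel_submatrix_succ_castSucc_succ_castSucc, Fin.val_zero, Fin.val_last, add_zero, zero_add,
    pow_zero, one_mul, Even.neg_one_pow (⟨n + 1, rfl⟩ : Even (n + 1 + (n + 1)))] at h
  have hsign : (-1 : R) ^ (n + 1) * (-1) ^ (n + 1) = 1 := by
    rw [← mul_pow, neg_one_mul, neg_neg, one_pow]
  linear_combination h + (hankel a 0 (n + 2)).det * (hankel a 1 (n + 1)).det ^ 2 * hsign

end Hankel

open Finset

theorem Finset.sum_range_mul_sub_one_eq_sum_range_add_one_mul {R : Type*} [CommSemiring R]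
    {u v : ℤ → R} {N : ℕ} (hv : v (-1) = 0) (hu : u N = 0) :
    ∑ k ∈ range N, u k * v (k - 1) = ∑ k ∈ range N, u (k + 1) * v k := by
  cases N with
  | zero => simp
  | succ N =>
    rw [sum_range_succ', sum_range_succ]
    push_cast at hu ⊢
    simp [hu, hv]

section Motzkin

variable (ω : ℚ)

theorem motzkinM_of_neg : ∀ (n : ℕ) {j : ℤ}, j < 0 → motzkinM ω n j = 0
  | 0, _, hj => if_neg hj.ne
  | _ + 1, _, hj => if_pos hj

theorem motzkinM_succ (n : ℕ) {j : ℤ} (hj : 0 ≤ j) :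
    motzkinM ω (n + 1) j = motzkinM ω n (j - 1) + ω * motzkinM ω n j + motzkinM ω n (j + 1) :=
  if_neg hj.not_gt

theorem motzkinM_of_lt : ∀ (n : ℕ) {j : ℤ}, n < j → motzkinM ω n j = 0
  | 0, _, hj => if_neg hj.ne'
  | n + 1, j, hj => by
    rw [motzkinM_succ ω n (by omega), motzkinM_of_lt n (by omega), motzkinM_of_lt n (by omega),
      motzkinM_of_lt n (by omega)]
    ring

theorem motzkinM_self : ∀ n : ℕ, motzkinM ω n n = 1
  | 0 => rfl
  | n + 1 => by
    rw [Nat.cast_succ, motzkinM_succ ω n (by positivity), add_sub_cancel_right, motzkinM_self n,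
      motzkinM_of_lt ω n (by omega), motzkinM_of_lt ω n (by omega)]
    ring

theorem sum_range_motzkinM_mul_succ {i j N : ℕ} (hi : i < N) (hj : j < N) :
    ∑ k ∈ range N, motzkinM ω i k * motzkinM ω (j + 1) k
      = ∑ k ∈ range N, motzkinM ω (i + 1) k * motzkinM ω j k := by
  -- the one-step transfer matrix (tridiagonal `1, ω, 1`) is symmetric
  simp only [motzkinM_succ ω _ (Int.natCast_nonneg _), mul_add, add_mul, sum_add_distrib]
  have down := sum_range_mul_sub_one_eq_sum_range_add_one_mul (u := motzkinM ω i)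
    (v := motzkinM ω j) (N := N) (motzkinM_of_neg ω j (by norm_num)) (motzkinM_of_lt ω i (by omega))
  have up := sum_range_mul_sub_one_eq_sum_range_add_one_mul (u := motzkinM ω j)
    (v := motzkinM ω i) (N := N) (motzkinM_of_neg ω i (by norm_num)) (motzkinM_of_lt ω j (by omega))
  simp only [mul_comm (motzkinM ω j _)] at up
  have level : ∑ k ∈ range N, motzkinM ω i k * (ω * motzkinM ω j k)
      = ∑ k ∈ range N, ω * motzkinM ω i k * motzkinM ω j k :=
    sum_congr rfl fun _ _ => by ring
  linear_combination down - up + level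

theorem sum_range_motzkinM_mul_of_add_lt :
    ∀ (j : ℕ) {i N : ℕ}, i + j < N →
      ∑ k ∈ range N, motzkinM ω i k * motzkinM ω j k = motzkinM ω (i + j) 0
  | 0, i, N, h => by
    simp [motzkinM, Finset.sum_ite_eq', mem_range.2 (show 0 < N by omega)]
  | j + 1, i, N, h => by
    rw [sum_range_motzkinM_mul_succ ω (by omega) (by omega),
      sum_range_motzkinM_mul_of_add_lt j (by omega), add_right_comm, add_assoc]

theorem sum_range_motzkinM_mul_eq_of_lt {i N : ℕ} (hi : i < N) (f : ℤ → ℚ) :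
    ∑ k ∈ range N, motzkinM ω i k * f k = ∑ k ∈ range (i + 1), motzkinM ω i k * f k := by
  refine (sum_subset (range_subset_range.2 hi) fun k _ hk => ?_).symm
  rw [motzkinM_of_lt ω i (by simp at hk; omega), zero_mul]

theorem sum_range_motzkinM_mul_motzkinM {i N : ℕ} (hi : i < N) (j : ℕ) :
    ∑ k ∈ range N, motzkinM ω i k * motzkinM ω j k = motzkinM ω (i + j) 0 := by
  rw [sum_range_motzkinM_mul_eq_of_lt ω hi,
    ← sum_range_motzkinM_mul_eq_of_lt ω (N := i + j + 1) (by omega),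
    sum_range_motzkinM_mul_of_add_lt ω j (by omega)]

def motzkinTriangle (m : ℕ) : Matrix (Fin m) (Fin m) ℚ :=
  Matrix.of fun i k => motzkinM ω i k

theorem det_motzkinTriangle (m : ℕ) : (motzkinTriangle ω m).det = 1 := by
  have hlower : (motzkinTriangle ω m).IsLowerTriangular := fun i k hik =>
    motzkinM_of_lt ω i (by exact_mod_cast hik)
  rw [Matrix.det_of_isLowerTriangular _ hlower]
  exact prod_eq_one fun i _ => motzkinM_self ω i

theorem hankel_motzkinM_eq_mul_transpose (m : ℕ) :
    hankel (motzkinM ω · 0) 0 m = motzkinTriangle ω m * (motzkinTriangle ω m).transpose := by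
  ext i j
  change motzkinM ω (i + j + 0) 0 = ∑ k : Fin m, motzkinM ω i k * motzkinM ω j k
  rw [Fin.sum_univ_eq_sum_range (fun k => motzkinM ω i k * motzkinM ω j k),
    sum_range_motzkinM_mul_motzkinM ω i.isLt, add_zero]

theorem det_hankel_motzkinM (m : ℕ) : (hankel (motzkinM ω · 0) 0 m).det = 1 := by
  rw [hankel_motzkinM_eq_mul_transpose, Matrix.det_mul, Matrix.det_transpose, det_motzkinTriangle,
    one_mul]

end Motzkin

theorem motzkin_hankel_recursion (ω : ℚ) (n : ℕ) :
    Matrix.det (Matrix.of fun i j : Fin (n+1) => motzkinM ω (i.val + j.val + 2) 0) =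
      Matrix.det (Matrix.of fun i j : Fin n => motzkinM ω (i.val + j.val + 2) 0) +
        (Matrix.det (Matrix.of fun i j : Fin (n+1) => motzkinM ω (i.val + j.val + 1) 0)) ^ 2 := by
  have h := det_mul_hankel_desnanot_jacobi (motzkinM ω · 0) n
  rw [det_hankel_motzkinM, det_hankel_motzkinM] at h
  change (hankel (motzkinM ω · 0) 2 (n + 1)).det =
    (hankel (motzkinM ω · 0) 2 n).det + (hankel (motzkinM ω · 0) 1 (n + 1)).det ^ 2
  linear_combination h
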